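/- Let (V,d) be a finite metric space, k ≥ 1, and let OPT(V,V) and OPT(V,C) denote the optimal k-median costs with centers chosen from V and from a nonempty subset C ⊆ V respectively. Then OPT(V,V) ≤ OPT(V,C), and if additionally Σ_{x∈V} d(x,C) ≤ β·OPT(V,V) for some β ≥ 0, then OPT(V,C) ≤ (2 + β)·OPT(V,V). -/

import Mathlib

/-! Moving every center `s` of an optimal solution `S` to a nearest point `c s` of `C` gives a
feasible solution with centers in `C`. For a client `x` and any `s ∈ S`,
`d(x, c s) ≤ d(x, s) + d(s, C) ≤ 2 d(x, s) + d(x, C)`, so summing over `x` bounds the cost of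
`c '' S` by `2 OPT(V,V) + Σ_x d(x,C) ≤ (2 + β) OPT(V,V)`. -/

open Metric

theorem Metric.infDist_image_le_two_mul_add {V : Type*} [PseudoMetricSpace V] {S C : Set V}
    (hS : S.Nonempty) {c : V → V} (hc : ∀ s ∈ S, dist s (c s) ≤ infDist s C) (x : V) :
    infDist x (c '' S) ≤ 2 * infDist x S + infDist x C := by
  suffices h : (infDist x (c '' S) - infDist x C) / 2 ≤ infDist x S by linarith
  refine (le_infDist hS).2 fun s hs => ?_
  have hcs : infDist x (c '' S) ≤ dist x (c s) :=
    infDist_le_dist_of_mem (Set.mem_image_of_mem c hs)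
  have hsC : infDist s C ≤ infDist x C + dist s x := infDist_le_infDist_add_dist
  linarith [dist_triangle x s (c s), dist_comm s x, hc s hs]

theorem Metric.sum_infDist_image_le_two_mul_add {V : Type*} [PseudoMetricSpace V] [Fintype V]
    {S C : Set V} (hS : S.Nonempty) {c : V → V} (hc : ∀ s ∈ S, dist s (c s) ≤ infDist s C) :
    ∑ x, infDist x (c '' S) ≤ 2 * ∑ x, infDist x S + ∑ x, infDist x C := by
  rw [Finset.mul_sum, ← Finset.sum_add_distrib]
  exact Finset.sum_le_sum fun x _ => infDist_image_le_two_mul_add hS hc x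

theorem stmt19_general {V : Type*} [MetricSpace V] [Fintype V]
    (k : ℕ) (C : Finset V) (hC : C.Nonempty)
    (OPTV OPTC : ℝ)
    (hOPTV : IsLeast {r : ℝ | ∃ S : Finset V, S.Nonempty ∧ S.card ≤ k ∧
      r = ∑ x : V, Metric.infDist x (S : Set V)} OPTV)
    (hOPTC : IsLeast {r : ℝ | ∃ S : Finset V, S ⊆ C ∧ S.Nonempty ∧ S.card ≤ k ∧
      r = ∑ x : V, Metric.infDist x (S : Set V)} OPTC) :
    OPTV ≤ OPTC ∧
    ∀ β : ℝ, 0 ≤ β → (∑ x : V, Metric.infDist x (C : Set V)) ≤ β * OPTV →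
      OPTC ≤ (2 + β) * OPTV := by
  classical
  refine ⟨?_, fun β _ hβ => ?_⟩
  · obtain ⟨S, -, hS, hSk, rfl⟩ := hOPTC.1
    exact hOPTV.2 ⟨S, hS, hSk, rfl⟩
  obtain ⟨S, hS, hSk, rfl⟩ := hOPTV.1
  choose c hcC hc using fun s => C.finite_toSet.isCompact.exists_infDist_eq_dist hC s
  have hT : OPTC ≤ ∑ x, infDist x (c '' S) := by
    refine hOPTC.2 ⟨S.image c, fun _ hy => ?_, hS.image c, Finset.card_image_le.trans hSk, ?_⟩
    · obtain ⟨s, -, rfl⟩ := Finset.mem_image.1 hy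
      exact hcC s
    · rw [Finset.coe_image]
  have hcost : ∑ x, infDist x (c '' S) ≤
      2 * ∑ x, infDist x (S : Set V) + ∑ x, infDist x (C : Set V) :=
    sum_infDist_image_le_two_mul_add (by exact_mod_cast hS) fun s _ => (hc s).ge
  linarith

/-- `OPT(V,V) ≤ OPT(V,C)`, and if `Σ_x d(x,C) ≤ β·OPT(V,V)` then
`OPT(V,C) ≤ (2+β)·OPT(V,V)`. -/
theorem stmt19 {V : Type*} [MetricSpace V] [Fintype V] [Nonempty V]
    (k : ℕ) (hk : 1 ≤ k) (C : Finset V) (hC : C.Nonempty)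
    (OPTV OPTC : ℝ)
    (hOPTV : IsLeast {r : ℝ | ∃ S : Finset V, S.Nonempty ∧ S.card ≤ k ∧
      r = ∑ x : V, Metric.infDist x (S : Set V)} OPTV)
    (hOPTC : IsLeast {r : ℝ | ∃ S : Finset V, S ⊆ C ∧ S.Nonempty ∧ S.card ≤ k ∧
      r = ∑ x : V, Metric.infDist x (S : Set V)} OPTC) :
    OPTV ≤ OPTC ∧
    ∀ β : ℝ, 0 ≤ β → (∑ x : V, Metric.infDist x (C : Set V)) ≤ β * OPTV →
      OPTC ≤ (2 + β) * OPTV :=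
  stmt19_general k C hC OPTV OPTC hOPTV hOPTC
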